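/- Let G_1,…,G_t be random d×n real matrices and W_1,…,W_t random n×n real matrices such that for each r, W_r is independent of (W_1,…,W_{r-1}, G_1,…,G_r), and each W_r satisfies E[W_r·W_rᵀ] = α₁I_n + (1−α₁)A_n and E[W_r·A_n·W_rᵀ] = α₂I_n + (1−α₂)A_n with 0 < α₂ < α₁ < 1; set β = α₁ − α₂. Define X = −γ·∑_{s=1}^{t} G_s·W_s·W_{s+1}⋯W_t. Then E‖ X·(I_n − A_n) ‖_F² ≤ ( γ²/(1 − √β) )·∑_{s=1}^{t} β^{(t−s)/2}·E‖ G_s·(I_n − A_n) ‖_F². -/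

import Mathlib

/-!
Write `P = I - A_n`, a symmetric idempotent, so `‖M P‖_F² = tr (P Mᵀ M)`. If `V` is independent
of `Y` then `E‖Y V P‖_F² = tr (E[V P Vᵀ] · E[Yᵀ Y])`, and the two moment hypotheses give
`E[W_r P W_rᵀ] = β P`; hence multiplying by one more independent factor `W_r` multiplies the
expected squared norm by `β`, and `E‖G_s W_s ⋯ W_t P‖_F² = β^(t+1-s) E‖G_s P‖_F²`. Cauchy–Schwarz
with weights `√β^(t-s)`, whose sum is at most `1 / (1 - √β)`, bounds the norm of the sum.
-/

open MeasureTheory ProbabilityTheory Matrix Real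

/-- Measurable-space structure on matrices (entrywise). -/
instance matrixMeasurableSpace {m n α : Type*} [MeasurableSpace α] :
    MeasurableSpace (Matrix m n α) := by unfold Matrix; infer_instance

/-- The `n × n` matrix `A_n = (1/n)·𝟙𝟙ᵀ` with all entries `1/n`. -/
noncomputable def stdA (n : ℕ) : Matrix (Fin n) (Fin n) ℝ := Matrix.of fun _ _ => (1 : ℝ) / n

/-- The squared Frobenius norm `‖M‖_F² = ∑_{a,b} M a b ^ 2`. -/
noncomputable def frobSq {m k : ℕ} (M : Matrix (Fin m) (Fin k) ℝ) : ℝ := ∑ a, ∑ b, M a b ^ 2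

/-- The ordered matrix product `W s ω * W (s+1) ω * ⋯ * W t ω`. -/
noncomputable def matProd {Ω : Type*} {n : ℕ} (W : ℕ → Ω → Matrix (Fin n) (Fin n) ℝ)
    (s t : ℕ) (ω : Ω) : Matrix (Fin n) (Fin n) ℝ :=
  ((List.range (t + 1 - s)).map fun k => W (s + k) ω).prod

open Finset

section MatrixFacts

lemma stdA_mul_stdA (n : ℕ) : stdA n * stdA n = stdA n := by
  ext a b
  have hn : (n : ℝ) ≠ 0 := Nat.cast_ne_zero.2 a.pos.ne'
  simp [stdA, mul_apply]
  field_simp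

lemma transpose_stdA (n : ℕ) : (stdA n)ᵀ = stdA n := rfl

lemma transpose_one_sub_stdA (n : ℕ) : (1 - stdA n)ᵀ = 1 - stdA n := by
  rw [transpose_sub, transpose_one, transpose_stdA]

lemma one_sub_stdA_mul_self (n : ℕ) : (1 - stdA n) * (1 - stdA n) = 1 - stdA n := by
  simp [Matrix.mul_sub, Matrix.sub_mul, stdA_mul_stdA]

variable {m k : ℕ}

lemma frobSq_eq_trace (M : Matrix (Fin m) (Fin k) ℝ) : frobSq M = trace (M * Mᵀ) := by
  simp [frobSq, trace, mul_apply, sq]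

lemma frobSq_nonneg (M : Matrix (Fin m) (Fin k) ℝ) : 0 ≤ frobSq M := by
  unfold frobSq; positivity

lemma frobSq_smul (r : ℝ) (M : Matrix (Fin m) (Fin k) ℝ) : frobSq (r • M) = r ^ 2 * frobSq M := by
  simp [frobSq, Finset.mul_sum, mul_pow]

lemma frobSq_mul_eq_trace {P : Matrix (Fin k) (Fin k) ℝ} (hPt : Pᵀ = P) (hPP : P * P = P)
    (M : Matrix (Fin m) (Fin k) ℝ) : frobSq (M * P) = trace (P * (Mᵀ * M)) := by
  rw [frobSq_eq_trace, transpose_mul, hPt, ← Matrix.mul_assoc, Matrix.mul_assoc M, hPP,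
    Matrix.mul_assoc, trace_mul_comm, Matrix.mul_assoc]

lemma frobSq_sum_le {ι : Type*} (F : Finset ι) (M : ι → Matrix (Fin m) (Fin k) ℝ) {c : ι → ℝ}
    (hc : ∀ s ∈ F, 0 < c s) :
    frobSq (∑ s ∈ F, M s) ≤ (∑ s ∈ F, c s) * ∑ s ∈ F, frobSq (M s) / c s := by
  rcases F.eq_empty_or_nonempty with rfl | hF
  · simp [frobSq]
  have hcpos : 0 < ∑ s ∈ F, c s := sum_pos hc hF
  have hentry (a : Fin m) (b : Fin k) :
      (∑ s ∈ F, M s a b) ^ 2 ≤ (∑ s ∈ F, c s) * ∑ s ∈ F, M s a b ^ 2 / c s := by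
    rw [← div_le_iff₀' hcpos]
    exact sq_sum_div_le_sum_sq_div F _ hc
  calc frobSq (∑ s ∈ F, M s) = ∑ a, ∑ b, (∑ s ∈ F, M s a b) ^ 2 := by
        simp [frobSq, Matrix.sum_apply]
    _ ≤ ∑ a, ∑ b, (∑ s ∈ F, c s) * ∑ s ∈ F, M s a b ^ 2 / c s := by
        gcongr with a _ b
        exact hentry a b
    _ = (∑ s ∈ F, c s) * ∑ s ∈ F, frobSq (M s) / c s := by
        simp only [← Finset.mul_sum, frobSq, Finset.sum_div]
        congr 1
        exact (Finset.sum_congr rfl fun a _ => Finset.sum_comm).trans Finset.sum_comm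

end MatrixFacts

section MatProd

variable {Ω : Type*} {n : ℕ} (W : ℕ → Ω → Matrix (Fin n) (Fin n) ℝ)

lemma matProd_of_lt {s u : ℕ} (h : u < s) (ω : Ω) : matProd W s u ω = 1 := by
  simp [matProd, Nat.sub_eq_zero_of_le h]

lemma matProd_succ {s u : ℕ} (h : s ≤ u + 1) (ω : Ω) :
    matProd W s (u + 1) ω = matProd W s u ω * W (u + 1) ω := by
  have h1 : u + 1 + 1 - s = (u + 1 - s) + 1 := by omega
  have h2 : s + (u + 1 - s) = u + 1 := by omega
  simp only [matProd, h1, List.range_succ, List.map_append, List.prod_append, List.map_cons,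
    List.map_nil, List.prod_cons, List.prod_nil, mul_one, h2]

end MatProd

section Measurability

variable {Ω : Type*} {mΩ : MeasurableSpace Ω}

lemma measurable_matrix_apply {m k : Type*} (a : m) (b : k) :
    Measurable fun M : Matrix m k ℝ => M a b :=
  (measurable_pi_apply b).comp (measurable_pi_apply a)

lemma Measurable.matrix_mul {m k l : Type*} [Fintype k] {f : Ω → Matrix m k ℝ}
    {g : Ω → Matrix k l ℝ} (hf : Measurable f) (hg : Measurable g) :
    Measurable fun ω => f ω * g ω :=
  measurable_pi_lambda _ fun a => measurable_pi_lambda _ fun b =>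
    Finset.measurable_sum _ fun c _ =>
      ((measurable_matrix_apply a c).comp hf).mul ((measurable_matrix_apply c b).comp hg)

lemma measurable_matrix_transpose {m k : Type*} : Measurable fun M : Matrix m k ℝ => Mᵀ :=
  measurable_pi_lambda _ fun a => measurable_pi_lambda _ fun b => measurable_matrix_apply b a

lemma measurable_matProd {n : ℕ} {W : ℕ → Ω → Matrix (Fin n) (Fin n) ℝ} {s : ℕ} (hs : 1 ≤ s) :
    ∀ u, s - 1 ≤ u → (∀ r, s ≤ r → r ≤ u → Measurable (W r)) → Measurable (matProd W s u) := by
  refine Nat.le_induction (fun _ => ?_) fun u hu ih hW => ?_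
  · simp only [funext (matProd_of_lt W (by omega : s - 1 < s))]
    exact measurable_const
  · simp only [funext (matProd_succ W (by omega : s ≤ u + 1))]
    exact (ih fun r h1 h2 => hW r h1 (by omega)).matrix_mul (hW (u + 1) (by omega) le_rfl)

end Measurability

noncomputable def meanMatrix {Ω : Type*} [MeasurableSpace Ω] (μ : Measure Ω) {m k : Type*}
    (A : Ω → Matrix m k ℝ) : Matrix m k ℝ :=
  Matrix.of fun i j => ∫ ω, A ω i j ∂μ

section Moments

variable {Ω : Type*} [MeasurableSpace Ω] {μ : Measure Ω}

lemma meanMatrix_const {ι κ : Type*} [IsProbabilityMeasure μ] (P : Matrix ι κ ℝ) :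
    meanMatrix μ (fun _ => P) = P := by
  ext i j; simp [meanMatrix]

lemma meanMatrix_sub {ι κ : Type*} {A B : Ω → Matrix ι κ ℝ}
    (hA : ∀ i j, Integrable (fun ω => A ω i j) μ) (hB : ∀ i j, Integrable (fun ω => B ω i j) μ) :
    meanMatrix μ (fun ω => A ω - B ω) = meanMatrix μ A - meanMatrix μ B := by
  ext i j; exact integral_sub (hA i j) (hB i j)

variable {m k l : ℕ}

lemma memLp_mul_const_apply {A : Ω → Matrix (Fin m) (Fin k) ℝ}
    (hA : ∀ i j, MemLp (fun ω => A ω i j) 2 μ) (C : Matrix (Fin k) (Fin l) ℝ) (i : Fin m)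
    (j : Fin l) : MemLp (fun ω => (A ω * C) i j) 2 μ := by
  simp only [mul_apply]
  exact memLp_finsetSum _ fun c _ => (hA i c).mul_const _

lemma integrable_mul_apply {A : Ω → Matrix (Fin m) (Fin k) ℝ} {B : Ω → Matrix (Fin k) (Fin l) ℝ}
    (hA : ∀ i j, MemLp (fun ω => A ω i j) 2 μ) (hB : ∀ i j, MemLp (fun ω => B ω i j) 2 μ)
    (i : Fin m) (j : Fin l) : Integrable (fun ω => (A ω * B ω) i j) μ := by
  simp only [mul_apply]
  exact integrable_finsetSum _ fun c _ => (hA i c).integrable_mul (hB c j)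

lemma memLp_mul_apply_of_indepFun {A : Ω → Matrix (Fin m) (Fin k) ℝ}
    {B : Ω → Matrix (Fin k) (Fin l) ℝ} (hA : ∀ i j, MemLp (fun ω => A ω i j) 2 μ)
    (hB : ∀ i j, MemLp (fun ω => B ω i j) 2 μ) (hAB : IndepFun A B μ) (i : Fin m) (j : Fin l) :
    MemLp (fun ω => (A ω * B ω) i j) 2 μ := by
  simp only [mul_apply]
  refine memLp_finsetSum _ fun c _ => ?_
  have hmeas : AEStronglyMeasurable (fun ω => A ω i c * B ω c j) μ := (hA i c).1.mul (hB c j).1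
  rw [memLp_two_iff_integrable_sq hmeas]
  simp_rw [mul_pow]
  exact ((hAB.comp (measurable_matrix_apply i c) (measurable_matrix_apply c j)).comp
    (measurable_id.pow_const 2) (measurable_id.pow_const 2)).integrable_mul
    (hA i c).integrable_sq (hB c j).integrable_sq

lemma integrable_frobSq {M : Ω → Matrix (Fin m) (Fin k) ℝ}
    (hM : ∀ i j, MemLp (fun ω => M ω i j) 2 μ) : Integrable (fun ω => frobSq (M ω)) μ :=
  integrable_finsetSum _ fun i _ => integrable_finsetSum _ fun j _ => (hM i j).integrable_sq

lemma integral_trace_mul_of_indepFun {A : Ω → Matrix (Fin m) (Fin k) ℝ}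
    {B : Ω → Matrix (Fin k) (Fin m) ℝ} (hA : ∀ i j, Integrable (fun ω => A ω i j) μ)
    (hB : ∀ i j, Integrable (fun ω => B ω i j) μ) (hAB : IndepFun A B μ) :
    ∫ ω, trace (A ω * B ω) ∂μ = trace (meanMatrix μ A * meanMatrix μ B) := by
  have hij (i : Fin m) (j : Fin k) : IndepFun (fun ω => A ω i j) (fun ω => B ω j i) μ :=
    hAB.comp (measurable_matrix_apply i j) (measurable_matrix_apply j i)
  have hint (i : Fin m) (j : Fin k) : Integrable (fun ω => A ω i j * B ω j i) μ :=
    (hij i j).integrable_mul (hA i j) (hB j i)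
  simp only [trace, Matrix.diag_apply, mul_apply, meanMatrix, of_apply]
  rw [integral_finsetSum _ fun i _ => integrable_finsetSum _ fun j _ => hint i j]
  refine Finset.sum_congr rfl fun i _ => ?_
  rw [integral_finsetSum _ fun j _ => hint i j]
  exact Finset.sum_congr rfl fun j _ =>
    (hij i j).integral_mul_eq_mul_integral (hA i j).1 (hB j i).1

end Moments

section Steps

variable {Ω : Type*} [MeasurableSpace Ω] {μ : Measure Ω} {m k : ℕ}

lemma meanMatrix_mul_one_sub_stdA_mul_transpose {n : ℕ} {V : Ω → Matrix (Fin n) (Fin n) ℝ}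
    (hV : ∀ i j, MemLp (fun ω => V ω i j) 2 μ) {α₁ α₂ : ℝ}
    (h₁ : meanMatrix μ (fun ω => V ω * (V ω)ᵀ) = α₁ • 1 + (1 - α₁) • stdA n)
    (h₂ : meanMatrix μ (fun ω => V ω * stdA n * (V ω)ᵀ) = α₂ • 1 + (1 - α₂) • stdA n) :
    meanMatrix μ (fun ω => V ω * (1 - stdA n) * (V ω)ᵀ) = (α₁ - α₂) • (1 - stdA n) := by
  have hsplit : (fun ω => V ω * (1 - stdA n) * (V ω)ᵀ) =
      fun ω => V ω * (V ω)ᵀ - V ω * stdA n * (V ω)ᵀ := by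
    funext ω; rw [Matrix.mul_sub, Matrix.mul_one, Matrix.sub_mul]
  have h₁' : ∀ i j, Integrable (fun ω => (V ω * (V ω)ᵀ) i j) μ :=
    integrable_mul_apply hV fun i j => hV j i
  have h₂' : ∀ i j, Integrable (fun ω => (V ω * stdA n * (V ω)ᵀ) i j) μ :=
    integrable_mul_apply (memLp_mul_const_apply hV _) fun i j => hV j i
  rw [hsplit, meanMatrix_sub h₁' h₂', h₁, h₂]
  module

lemma integral_frobSq_mul_mul_of_indepFun [IsProbabilityMeasure μ] {P : Matrix (Fin k) (Fin k) ℝ}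
    (hPt : Pᵀ = P) (hPP : P * P = P) {β : ℝ} {Y : Ω → Matrix (Fin m) (Fin k) ℝ}
    {V : Ω → Matrix (Fin k) (Fin k) ℝ} (hY : ∀ i j, MemLp (fun ω => Y ω i j) 2 μ)
    (hV : ∀ i j, MemLp (fun ω => V ω i j) 2 μ) (hVY : IndepFun V Y μ)
    (hmean : meanMatrix μ (fun ω => V ω * P * (V ω)ᵀ) = β • P) :
    ∫ ω, frobSq (Y ω * V ω * P) ∂μ = β * ∫ ω, frobSq (Y ω * P) ∂μ := by
  have hYY : ∀ i j, Integrable (fun ω => ((Y ω)ᵀ * Y ω) i j) μ :=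
    integrable_mul_apply (fun i j => hY j i) hY
  have hVPV : ∀ i j, Integrable (fun ω => (V ω * P * (V ω)ᵀ) i j) μ :=
    integrable_mul_apply (memLp_mul_const_apply hV P) fun i j => hV j i
  have hindep : IndepFun (fun ω => V ω * P * (V ω)ᵀ) (fun ω => (Y ω)ᵀ * Y ω) μ :=
    hVY.comp ((measurable_id.matrix_mul measurable_const).matrix_mul measurable_matrix_transpose)
      (measurable_matrix_transpose.matrix_mul measurable_id)
  have hcyc (ω : Ω) :
      frobSq (Y ω * V ω * P) = trace (V ω * P * (V ω)ᵀ * ((Y ω)ᵀ * Y ω)) := by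
    rw [frobSq_mul_eq_trace hPt hPP, transpose_mul, Matrix.mul_assoc (V ω),
      Matrix.mul_assoc (V ω), trace_mul_comm (V ω)]
    simp only [Matrix.mul_assoc]
  simp_rw [hcyc, frobSq_mul_eq_trace hPt hPP]
  rw [integral_trace_mul_of_indepFun hVPV hYY hindep,
    integral_trace_mul_of_indepFun (A := fun _ => P) (fun _ _ => integrable_const _) hYY
      (indepFun_const_left P _),
    hmean, meanMatrix_const, smul_mul_assoc, trace_smul, smul_eq_mul]

end Steps

section Recursion

variable {Ω : Type*} [MeasurableSpace Ω] {μ : Measure Ω} {n d : ℕ}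
  {W : ℕ → Ω → Matrix (Fin n) (Fin n) ℝ} {G : ℕ → Ω → Matrix (Fin d) (Fin n) ℝ}

def history (W : ℕ → Ω → Matrix (Fin n) (Fin n) ℝ) (G : ℕ → Ω → Matrix (Fin d) (Fin n) ℝ)
    (r : ℕ) (ω : Ω) :
    (Fin (r - 1) → Matrix (Fin n) (Fin n) ℝ) × (Fin r → Matrix (Fin d) (Fin n) ℝ) :=
  (fun q => W (q + 1) ω, fun q => G (q + 1) ω)

lemma indepFun_mul_matProd {r s : ℕ} (h : IndepFun (W r) (history W G r) μ) (hs : 1 ≤ s)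
    (hsr : s ≤ r) : IndepFun (W r) (fun ω => G s ω * matProd W s (r - 1) ω) μ := by
  let mH : MeasurableSpace Ω := MeasurableSpace.comap (history W G r) inferInstance
  have hH : Measurable[mH] (history W G r) := comap_measurable _
  have hW : ∀ q, s ≤ q → q ≤ r - 1 → Measurable[mH] (W q) := by
    intro q hsq hqr
    have hWq : W q = fun ω => (history W G r ω).1 ⟨q - 1, by omega⟩ := by
      funext ω; simp only [history]; congr; omega
    rw [hWq]
    exact ((measurable_pi_apply _).comp measurable_fst).comp hH
  have hG : Measurable[mH] (G s) := by
    have hGs : G s = fun ω => (history W G r ω).2 ⟨s - 1, by omega⟩ := by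
      funext ω; simp only [history]; congr; omega
    rw [hGs]
    exact ((measurable_pi_apply _).comp measurable_snd).comp hH
  rw [IndepFun_iff_Indep] at h ⊢
  exact indep_of_indep_of_le_right h
    (hG.matrix_mul (measurable_matProd hs (r - 1) (by omega) hW)).comap_le

lemma memLp_mul_matProd {t : ℕ} (hWL2 : ∀ r a b, MemLp (fun ω => W r ω a b) 2 μ)
    (hGL2 : ∀ r a b, MemLp (fun ω => G r ω a b) 2 μ)
    (hindep : ∀ r ∈ Finset.Icc 1 t, IndepFun (W r) (history W G r) μ) {s : ℕ} (hs : 1 ≤ s) :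
    ∀ u, s - 1 ≤ u → u ≤ t → ∀ i j, MemLp (fun ω => (G s ω * matProd W s u ω) i j) 2 μ := by
  refine Nat.le_induction (fun _ => ?_) fun u hu ih hut => ?_
  · simpa only [matProd_of_lt W (by omega : s - 1 < s), Matrix.mul_one] using hGL2 s
  · simp only [matProd_succ W (by omega : s ≤ u + 1), ← Matrix.mul_assoc]
    exact memLp_mul_apply_of_indepFun (ih (by omega)) (hWL2 (u + 1))
      (indepFun_mul_matProd (hindep (u + 1) (mem_Icc.2 ⟨by omega, hut⟩)) hs (by omega)).symm

lemma integral_frobSq_mul_matProd_mul [IsProbabilityMeasure μ] {t : ℕ}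
    (hWL2 : ∀ r a b, MemLp (fun ω => W r ω a b) 2 μ)
    (hGL2 : ∀ r a b, MemLp (fun ω => G r ω a b) 2 μ)
    (hindep : ∀ r ∈ Finset.Icc 1 t, IndepFun (W r) (history W G r) μ)
    {P : Matrix (Fin n) (Fin n) ℝ} (hPt : Pᵀ = P) (hPP : P * P = P) {β : ℝ}
    (hmean : ∀ r ∈ Finset.Icc 1 t, meanMatrix μ (fun ω => W r ω * P * (W r ω)ᵀ) = β • P)
    {s : ℕ} (hs : 1 ≤ s) :
    ∀ u, s - 1 ≤ u → u ≤ t → ∫ ω, frobSq (G s ω * matProd W s u ω * P) ∂μ =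
      β ^ (u + 1 - s) * ∫ ω, frobSq (G s ω * P) ∂μ := by
  refine Nat.le_induction (fun _ => ?_) fun u hu ih hut => ?_
  · simp [matProd_of_lt W (by omega : s - 1 < s), Nat.sub_add_cancel hs]
  · have hr : u + 1 ∈ Finset.Icc 1 t := mem_Icc.2 ⟨by omega, hut⟩
    simp only [matProd_succ W (by omega : s ≤ u + 1), ← Matrix.mul_assoc]
    rw [integral_frobSq_mul_mul_of_indepFun hPt hPP
      (memLp_mul_matProd hWL2 hGL2 hindep hs u hu (by omega)) (hWL2 (u + 1))
      (indepFun_mul_matProd (hindep _ hr) hs (by omega)) (hmean _ hr), ih (by omega),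
      ← mul_assoc, ← pow_succ']
    congr 2
    omega

end Recursion

lemma integral_frobSq_sum_le {Ω : Type*} [MeasurableSpace Ω] {μ : Measure Ω} {m k : ℕ}
    {ι : Type*} (F : Finset ι) {M : ι → Ω → Matrix (Fin m) (Fin k) ℝ} {c e : ι → ℝ}
    (hc : ∀ s ∈ F, 0 < c s) (hM : ∀ s ∈ F, ∀ i j, MemLp (fun ω => M s ω i j) 2 μ)
    (hbound : ∀ s ∈ F, ∫ ω, frobSq (M s ω) ∂μ ≤ c s ^ 2 * e s) :
    ∫ ω, frobSq (∑ s ∈ F, M s ω) ∂μ ≤ (∑ s ∈ F, c s) * ∑ s ∈ F, c s * e s := by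
  have hint : ∀ s ∈ F, Integrable (fun ω => frobSq (M s ω) / c s) μ :=
    fun s hs => (integrable_frobSq (hM s hs)).div_const _
  calc ∫ ω, frobSq (∑ s ∈ F, M s ω) ∂μ
      ≤ ∫ ω, (∑ s ∈ F, c s) * ∑ s ∈ F, frobSq (M s ω) / c s ∂μ :=
        integral_mono_of_nonneg (ae_of_all _ fun _ => frobSq_nonneg _)
          ((integrable_finsetSum F hint).const_mul _) (ae_of_all _ fun _ => frobSq_sum_le F _ hc)
    _ = (∑ s ∈ F, c s) * ∑ s ∈ F, (∫ ω, frobSq (M s ω) ∂μ) / c s := by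
        rw [integral_const_mul, integral_finsetSum F hint]
        simp_rw [integral_div]
    _ ≤ (∑ s ∈ F, c s) * ∑ s ∈ F, c s * e s := by
        gcongr with s hs
        · exact sum_nonneg fun s hs => (hc s hs).le
        · rw [div_le_iff₀ (hc s hs)]
          linarith [hbound s hs]

lemma sum_Icc_pow_sub_le {ρ : ℝ} (h₀ : 0 ≤ ρ) (h₁ : ρ < 1) (t : ℕ) :
    ∑ s ∈ Icc 1 t, ρ ^ (t - s) ≤ 1 / (1 - ρ) := by
  have hreflect := sum_Ico_reflect (fun j => ρ ^ j) 1 (le_refl (t + 1))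
  simp only [Nat.sub_self, Nat.add_sub_cancel] at hreflect
  rw [← Ico_add_one_right_eq_Icc, hreflect]
  simpa using geom_sum_Ico_le_of_lt_one (m := 0) (n := t) h₀ h₁

theorem statement14_general {Ω : Type*} [MeasurableSpace Ω] {μ : Measure Ω} [IsProbabilityMeasure μ]
    {n d : ℕ} (t : ℕ) (γ α₁ α₂ : ℝ)
    (hα₂ : 0 < α₂) (hα₁₂ : α₂ < α₁) (hα₁ : α₁ < 1)
    (W : ℕ → Ω → Matrix (Fin n) (Fin n) ℝ)
    (G : ℕ → Ω → Matrix (Fin d) (Fin n) ℝ)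
    (hWL2 : ∀ r a b, MemLp (fun ω => W r ω a b) 2 μ)
    (hGL2 : ∀ r a b, MemLp (fun ω => G r ω a b) 2 μ)
    (hindep : ∀ r ∈ Finset.Icc 1 t,
        IndepFun (W r)
          (fun ω => ((fun q : Fin (r - 1) => W ((q : ℕ) + 1) ω),
            (fun q : Fin r => G ((q : ℕ) + 1) ω))) μ)
    (hW1 : ∀ r ∈ Finset.Icc 1 t,
        (Matrix.of fun a b => ∫ ω, (W r ω * (W r ω)ᵀ) a b ∂μ) =
          α₁ • (1 : Matrix (Fin n) (Fin n) ℝ) + (1 - α₁) • stdA n)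
    (hW2 : ∀ r ∈ Finset.Icc 1 t,
        (Matrix.of fun a b => ∫ ω, (W r ω * stdA n * (W r ω)ᵀ) a b ∂μ) =
          α₂ • (1 : Matrix (Fin n) (Fin n) ℝ) + (1 - α₂) • stdA n)
    (X : Ω → Matrix (Fin d) (Fin n) ℝ)
    (hX : ∀ ω, X ω = -γ • ∑ s ∈ Finset.Icc 1 t, G s ω * matProd W s t ω) :
    (∫ ω, frobSq (X ω * ((1 : Matrix (Fin n) (Fin n) ℝ) - stdA n)) ∂μ) ≤
      γ ^ 2 / (1 - Real.sqrt (α₁ - α₂)) *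
        ∑ s ∈ Finset.Icc 1 t, Real.sqrt (α₁ - α₂) ^ (t - s) *
          ∫ ω, frobSq (G s ω * ((1 : Matrix (Fin n) (Fin n) ℝ) - stdA n)) ∂μ := by
  set P : Matrix (Fin n) (Fin n) ℝ := 1 - stdA n
  have hβ : 0 < α₁ - α₂ := by linarith
  set ρ := √(α₁ - α₂)
  have hρ₀ : 0 < ρ := sqrt_pos.2 hβ
  have hρ₁ : ρ < 1 := (sqrt_lt' one_pos).2 (by linarith)
  have hmean (r : ℕ) (hr : r ∈ Icc 1 t) :
      meanMatrix μ (fun ω => W r ω * P * (W r ω)ᵀ) = (α₁ - α₂) • P :=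
    meanMatrix_mul_one_sub_stdA_mul_transpose (hWL2 r) (hW1 r hr) (hW2 r hr)
  have hterm (s : ℕ) (hs : s ∈ Icc 1 t) : ∫ ω, frobSq (G s ω * matProd W s t ω * P) ∂μ ≤
      (ρ ^ (t - s)) ^ 2 * ∫ ω, frobSq (G s ω * P) ∂μ := by
    rw [mem_Icc] at hs
    have hρsq : (ρ ^ (t - s)) ^ 2 = (α₁ - α₂) ^ (t - s) := by
      rw [← pow_mul, mul_comm, pow_mul, sq_sqrt hβ.le]
    rw [integral_frobSq_mul_matProd_mul hWL2 hGL2 hindep (transpose_one_sub_stdA n)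
      (one_sub_stdA_mul_self n) hmean hs.1 t (by omega) le_rfl, hρsq]
    exact mul_le_mul_of_nonneg_right (pow_le_pow_of_le_one hβ.le (by linarith) (by omega))
      (integral_nonneg fun _ => frobSq_nonneg _)
  have hXP (ω : Ω) : frobSq (X ω * P) =
      γ ^ 2 * frobSq (∑ s ∈ Icc 1 t, G s ω * matProd W s t ω * P) := by
    rw [hX, Matrix.smul_mul, Matrix.sum_mul, frobSq_smul, neg_sq]
  simp_rw [hXP]
  rw [integral_const_mul]
  calc γ ^ 2 * ∫ ω, frobSq (∑ s ∈ Icc 1 t, G s ω * matProd W s t ω * P) ∂μ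
      ≤ γ ^ 2 * ((∑ s ∈ Icc 1 t, ρ ^ (t - s)) *
          ∑ s ∈ Icc 1 t, ρ ^ (t - s) * ∫ ω, frobSq (G s ω * P) ∂μ) := by
        gcongr
        refine integral_frobSq_sum_le _ (fun s _ => pow_pos hρ₀ _) (fun s hs => ?_) hterm
        obtain ⟨hs₁, hst⟩ := mem_Icc.1 hs
        exact memLp_mul_const_apply
          (memLp_mul_matProd hWL2 hGL2 hindep hs₁ t (by omega) le_rfl) P
    _ ≤ γ ^ 2 * (1 / (1 - ρ) * ∑ s ∈ Icc 1 t, ρ ^ (t - s) * ∫ ω, frobSq (G s ω * P) ∂μ) := by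
        gcongr
        · exact sum_nonneg fun s _ =>
            mul_nonneg (pow_nonneg hρ₀.le _) (integral_nonneg fun _ => frobSq_nonneg _)
        · exact sum_Icc_pow_sub_le hρ₀.le hρ₁ t
    _ = _ := by ring

/-- Let `G 1, …, G t` be random `d × n` matrices and `W 1, …, W t`
random `n × n` matrices such that each `W r` is independent of
`(W 1, …, W (r−1), G 1, …, G r)`, with `E[W r·(W r)ᵀ] = α₁I + (1−α₁)A_n` and
`E[W r·A_n·(W r)ᵀ] = α₂I + (1−α₂)A_n`, `0 < α₂ < α₁ < 1`, `β = α₁ − α₂`.  Set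
`X = −γ·∑_{s=1}^t G s · W s ⋯ W t`.  Then
`E‖X·(I−A_n)‖_F² ≤ (γ²/(1−√β))·∑_{s=1}^t β^{(t−s)/2}·E‖G s·(I−A_n)‖_F²`. -/
theorem statement14 {Ω : Type*} [MeasurableSpace Ω] {μ : Measure Ω} [IsProbabilityMeasure μ]
    {n d : ℕ} (hn : 1 ≤ n) (t : ℕ) (ht : 1 ≤ t) (γ α₁ α₂ : ℝ)
    (hα₂ : 0 < α₂) (hα₁₂ : α₂ < α₁) (hα₁ : α₁ < 1)
    (W : ℕ → Ω → Matrix (Fin n) (Fin n) ℝ)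
    (G : ℕ → Ω → Matrix (Fin d) (Fin n) ℝ)
    (hWmeas : ∀ r, Measurable (W r)) (hGmeas : ∀ r, Measurable (G r))
    (hWL2 : ∀ r a b, MemLp (fun ω => W r ω a b) 2 μ)
    (hGL2 : ∀ r a b, MemLp (fun ω => G r ω a b) 2 μ)
    (hindep : ∀ r ∈ Finset.Icc 1 t,
        IndepFun (W r)
          (fun ω => ((fun q : Fin (r - 1) => W ((q : ℕ) + 1) ω),
            (fun q : Fin r => G ((q : ℕ) + 1) ω))) μ)
    (hW1 : ∀ r ∈ Finset.Icc 1 t,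
        (Matrix.of fun a b => ∫ ω, (W r ω * (W r ω)ᵀ) a b ∂μ) =
          α₁ • (1 : Matrix (Fin n) (Fin n) ℝ) + (1 - α₁) • stdA n)
    (hW2 : ∀ r ∈ Finset.Icc 1 t,
        (Matrix.of fun a b => ∫ ω, (W r ω * stdA n * (W r ω)ᵀ) a b ∂μ) =
          α₂ • (1 : Matrix (Fin n) (Fin n) ℝ) + (1 - α₂) • stdA n)
    (X : Ω → Matrix (Fin d) (Fin n) ℝ)
    (hX : ∀ ω, X ω = -γ • ∑ s ∈ Finset.Icc 1 t, G s ω * matProd W s t ω) :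
    (∫ ω, frobSq (X ω * ((1 : Matrix (Fin n) (Fin n) ℝ) - stdA n)) ∂μ) ≤
      γ ^ 2 / (1 - Real.sqrt (α₁ - α₂)) *
        ∑ s ∈ Finset.Icc 1 t, Real.sqrt (α₁ - α₂) ^ (t - s) *
          ∫ ω, frobSq (G s ω * ((1 : Matrix (Fin n) (Fin n) ℝ) - stdA n)) ∂μ :=
  statement14_general t γ α₁ α₂ hα₂ hα₁₂ hα₁ W G hWL2 hGL2 hindep hW1 hW2 X hX
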